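/- (Rogers–Zong inequality) For convex bodies K, L in ℝⁿ, the translative covering number satisfies C(K, L) ≤ (vol(K - L)/vol(L)) · θ(L), where θ(L) is the translative covering density of ℝⁿ by L. -/

import Mathlib

/-!
Rogers' averaging argument. Let `K ⊆ [-ρ, ρ]ⁿ` and cover `[-R, R]ⁿ` by `m` translates `x i + L`
of nearly optimal density. For every `t ∈ [-(R - ρ), R - ρ]ⁿ` the translate `t + K` lies in
`[-R, R]ⁿ`, so `K` is covered by the translates `x i - t + L` with `x i - t ∈ K - L`. Integrating
the number of such `i` over `t` gives `m · vol (K - L)`, so for some `t` it is at most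
`m · vol (K - L) / (2 (R - ρ))ⁿ`, which tends to `vol (K - L) / vol L · θ(L)` as `R → ∞`.
-/

open MeasureTheory Pointwise Filter ENNReal

/-- The minimal number of translates of `B` needed to cover `A` (`⊤` if no finite
cover by translates exists). -/
noncomputable def covNumber {n : ℕ} (A B : Set (EuclideanSpace ℝ (Fin n))) : ℕ∞ :=
  sInf {N : ℕ∞ | ∃ t : Finset (EuclideanSpace ℝ (Fin n)),
    (t.card : ℕ∞) = N ∧ A ⊆ ⋃ x ∈ t, x +ᵥ B}

/-- The infimal density of coverings of the cube `[-R, R]ⁿ` by translates of `L`: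
`inf { vol(L)·#Λ/(2R)ⁿ : [-R,R]ⁿ ⊆ ⋃_{λ ∈ Λ} (x_λ + L) }`. -/
noncomputable def covDensityApprox {n : ℕ} (L : Set (EuclideanSpace ℝ (Fin n))) (R : ℝ) : ℝ :=
  sInf {d : ℝ | ∃ (m : ℕ) (x : Fin m → EuclideanSpace ℝ (Fin n)),
    {y : EuclideanSpace ℝ (Fin n) | ∀ i, |y i| ≤ R} ⊆ (⋃ i, x i +ᵥ L) ∧
      d = (volume L).toReal * m / (2 * R) ^ n}

open Set
open scoped Finset

section Averaging

variable {G : Type*} [MeasurableSpace G] [AddGroup G] [MeasurableAdd G] [MeasurableNeg G]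
  (μ : Measure G) [μ.IsAddLeftInvariant] [μ.IsNegInvariant]

open Classical in
theorem exists_mem_card_sub_mem_le {ι : Type*} [Fintype ι] (x : ι → G) {D Q : Set G}
    (hD : MeasurableSet D) (hQ₀ : μ Q ≠ 0) (hQ : μ Q ≠ ∞) :
    ∃ t ∈ Q, (#{i | x i - t ∈ D} : ℝ≥0∞) ≤ Fintype.card ι * μ D / μ Q := by
  set A : ι → Set G := fun i => (x i - ·) ⁻¹' D
  have hA : ∀ i, MeasurableSet (A i) := fun i => hD.preimage (measurable_const_sub (x i))
  have hcount : ∀ t, (#{i | x i - t ∈ D} : ℝ≥0∞) = ∑ i, (A i).indicator 1 t := by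
    intro t
    rw [Finset.natCast_card_filter]
    simp [indicator_apply, A]
  obtain ⟨t, ht, hle⟩ := exists_le_setLAverage hQ₀ hQ
    (Finset.measurable_sum _ fun i _ => measurable_one.indicator (hA i)).aemeasurable
  refine ⟨t, ht, (hcount t).le.trans (hle.trans ?_)⟩
  rw [setLAverage_eq]
  gcongr
  calc ∫⁻ s in Q, ∑ i, (A i).indicator 1 s ∂μ
      = ∑ i, μ (A i ∩ Q) := by
        rw [lintegral_finsetSum _ fun i _ => measurable_one.indicator (hA i)]
        simp_rw [lintegral_indicator_one (hA _), Measure.restrict_apply (hA _)]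
    _ ≤ ∑ _i : ι, μ D := Finset.sum_le_sum fun i _ => (measure_mono inter_subset_left).trans_eq
          ((Measure.measurePreserving_sub_left μ (x i)).measure_preimage hD.nullMeasurableSet)
    _ = Fintype.card ι * μ D := by simp

end Averaging

def cube (n : ℕ) (R : ℝ) : Set (EuclideanSpace ℝ (Fin n)) := {y | ∀ i, |y i| ≤ R}

section Cube

variable {n : ℕ}

theorem cube_eq_preimage_pi (R : ℝ) :
    cube n R = (MeasurableEquiv.toLp 2 (Fin n → ℝ)).symm ⁻¹' univ.pi fun _ => Icc (-R) R := by
  ext y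
  simp only [cube, mem_preimage, mem_univ_pi, mem_Icc, mem_ofPred_eq, abs_le]
  rfl

theorem isCompact_cube (R : ℝ) : IsCompact (cube n R) := by
  rw [cube_eq_preimage_pi]
  exact (EuclideanSpace.equiv (Fin n) ℝ).toHomeomorph.isCompact_preimage.mpr
    (isCompact_univ_pi fun _ => isCompact_Icc)

theorem volume_cube {R : ℝ} (hR : 0 ≤ R) : volume (cube n R) = ENNReal.ofReal ((2 * R) ^ n) := by
  rw [cube_eq_preimage_pi,
    (EuclideanSpace.volume_preserving_symm_measurableEquiv_toLp (Fin n)).measure_preimage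
      (MeasurableSet.univ_pi fun _ => measurableSet_Icc).nullMeasurableSet, volume_pi_pi]
  simp only [Real.volume_Icc, Finset.prod_const, Finset.card_univ, Fintype.card_fin]
  rw [← ENNReal.ofReal_pow (by linarith)]
  ring_nf

theorem closedBall_zero_subset_cube (r : ℝ) : Metric.closedBall 0 r ⊆ cube n r :=
  fun y hy i => (PiLp.norm_apply_le y i).trans (mem_closedBall_zero_iff.mp hy)

theorem add_mem_cube {r s : ℝ} {x y : EuclideanSpace ℝ (Fin n)} (hx : x ∈ cube n r)
    (hy : y ∈ cube n s) : x + y ∈ cube n (r + s) :=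
  fun i => (abs_add_le _ _).trans (add_le_add (hx i) (hy i))

end Cube

section Covering

variable {n : ℕ} {K L : Set (EuclideanSpace ℝ (Fin n))}

theorem covNumber_le_card {t : Finset (EuclideanSpace ℝ (Fin n))}
    (h : K ⊆ ⋃ x ∈ t, x +ᵥ L) : covNumber K L ≤ t.card :=
  sInf_le ⟨t, rfl, h⟩

open Classical in
theorem covNumber_le_card_sub_mem {ι : Type*} [Fintype ι] (x : ι → EuclideanSpace ℝ (Fin n))
    (t : EuclideanSpace ℝ (Fin n)) (h : t +ᵥ K ⊆ ⋃ i, x i +ᵥ L) :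
    covNumber K L ≤ #{i | x i - t ∈ K - L} := by
  set s : Finset ι := {i | x i - t ∈ K - L}
  refine (covNumber_le_card (t := s.image (x · - t)) ?_).trans (by exact_mod_cast s.card_image_le)
  intro k hk
  obtain ⟨i, hi⟩ := mem_iUnion.mp (h (vadd_mem_vadd_set hk))
  have hl : t + k - x i ∈ L := by
    simpa [mem_vadd_set_iff_neg_vadd_mem, sub_eq_neg_add, add_comm] using hi
  have hs : i ∈ s := by
    simp only [s, Finset.mem_filter, Finset.mem_univ, true_and]
    convert sub_mem_sub hk hl using 1
    abel
  refine mem_iUnion₂.mpr ⟨x i - t, Finset.mem_image_of_mem _ hs, ?_⟩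
  rw [mem_vadd_set_iff_neg_vadd_mem, vadd_eq_add]
  convert hl using 1
  abel

theorem exists_cover_cube_lt_covDensityApprox_add (hL : (interior L).Nonempty) {R ε : ℝ}
    (hε : 0 < ε) :
    ∃ (m : ℕ) (x : Fin m → EuclideanSpace ℝ (Fin n)), cube n R ⊆ ⋃ i, x i +ᵥ L ∧
      (volume L).toReal * m / (2 * R) ^ n < covDensityApprox L R + ε := by
  refine (exists_lt_of_csInf_lt ?_ (lt_add_of_pos_right (covDensityApprox L R) hε)).elim ?_
  · obtain ⟨s, hs⟩ := compact_covered_by_add_left_translates (isCompact_cube R) hL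
    refine ⟨_, s.card, fun i => -(s.equivFin.symm i : EuclideanSpace ℝ (Fin n)), fun y hy => ?_,
      rfl⟩
    obtain ⟨g, hg, hyg⟩ := mem_iUnion₂.mp (hs hy)
    refine mem_iUnion.mpr ⟨s.equivFin ⟨g, hg⟩, ?_⟩
    simpa [mem_vadd_set_iff_neg_vadd_mem] using hyg
  · rintro _ ⟨⟨m, x, hcov, rfl⟩, hlt⟩
    exact ⟨m, x, hcov, hlt⟩

theorem covNumber_le_of_cover_cube {ρ R : ℝ} (hK : K ⊆ cube n ρ) (hKL : MeasurableSet (K - L))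
    (hρR : ρ < R) {m : ℕ} (x : Fin m → EuclideanSpace ℝ (Fin n))
    (hcov : cube n R ⊆ ⋃ i, x i +ᵥ L) :
    (covNumber K L : ℝ≥0∞) ≤ m * volume (K - L) / volume (cube n (R - ρ)) := by
  have hQ : volume (cube n (R - ρ)) = ENNReal.ofReal ((2 * (R - ρ)) ^ n) :=
    volume_cube (by linarith)
  obtain ⟨t, ht, hle⟩ := exists_mem_card_sub_mem_le volume x hKL
    (by rw [hQ]; exact (ENNReal.ofReal_pos.mpr (by have := sub_pos.mpr hρR; positivity)).ne')
    (by rw [hQ]; exact ENNReal.ofReal_ne_top)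
  rw [Fintype.card_fin] at hle
  refine le_trans ?_ hle
  have htK : t +ᵥ K ⊆ cube n R := by
    rintro _ ⟨k, hk, rfl⟩
    simpa using add_mem_cube ht (hK hk)
  simpa using ENat.toENNReal_le.mpr (covNumber_le_card_sub_mem x t (htK.trans hcov))

theorem covNumber_le_covDensityApprox {ρ R ε : ℝ} (hK : K ⊆ cube n ρ) (hKL : IsCompact (K - L))
    (hL : IsCompact L) (hLint : (interior L).Nonempty) (hρR : ρ < R) (hR : 0 < R) (hε : 0 < ε) :
    (covNumber K L : ℝ≥0∞) ≤ ENNReal.ofReal ((volume (K - L)).toReal / (volume L).toReal *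
      (covDensityApprox L R + ε) * (R / (R - ρ)) ^ n) := by
  obtain ⟨m, x, hcov, hdens⟩ := exists_cover_cube_lt_covDensityApprox_add hLint hε
  set vD := (volume (K - L)).toReal
  set vL := (volume L).toReal
  set c := covDensityApprox L R + ε
  have hvL : 0 < vL := ENNReal.toReal_pos
    (Measure.measure_pos_of_nonempty_interior _ hLint).ne' hL.measure_lt_top.ne
  have hRρ : 0 < R - ρ := sub_pos.mpr hρR
  have hm : (m : ℝ) ≤ c * (2 * R) ^ n / vL := by
    rw [le_div_iff₀ hvL]
    rw [div_lt_iff₀ (by positivity)] at hdens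
    linarith
  calc (covNumber K L : ℝ≥0∞) ≤ m * volume (K - L) / volume (cube n (R - ρ)) :=
        covNumber_le_of_cover_cube hK hKL.measurableSet hρR x hcov
    _ = ENNReal.ofReal (m * vD / (2 * (R - ρ)) ^ n) := by
        rw [volume_cube hRρ.le, ← ofReal_toReal hKL.measure_lt_top.ne, ← ofReal_natCast,
          ← ofReal_mul (Nat.cast_nonneg m), ← ofReal_div_of_pos (by positivity)]
    _ ≤ ENNReal.ofReal (vD / vL * c * (R / (R - ρ)) ^ n) := by
        refine ofReal_le_ofReal ?_
        rw [show vD / vL * c * (R / (R - ρ)) ^ n = c * (2 * R) ^ n / vL * vD / (2 * (R - ρ)) ^ n by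
          rw [mul_pow, mul_pow, div_pow]
          field_simp]
        gcongr

end Covering

theorem tendsto_div_sub_const_atTop (ρ : ℝ) :
    Tendsto (fun R : ℝ => R / (R - ρ)) atTop (nhds 1) := by
  have h : Tendsto (fun R : ℝ => (1 - ρ * R⁻¹)⁻¹) atTop (nhds (1 - ρ * 0)⁻¹) :=
    (tendsto_const_nhds.sub (tendsto_inv_atTop_zero.const_mul ρ)).inv₀ (by simp)
  rw [mul_zero, sub_zero, inv_one] at h
  refine h.congr' ?_
  filter_upwards [eventually_ne_atTop 0] with R hR
  field_simp

theorem rogers_zong_general {n : ℕ} (K L : Set (EuclideanSpace ℝ (Fin n)))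
    (hKc : IsCompact K) (hLc : IsCompact L) (hLint : (interior L).Nonempty)
    (θL : ℝ) (hθ : Tendsto (covDensityApprox L) atTop (nhds θL)) :
    (covNumber K L : ℝ≥0∞) ≤
      ENNReal.ofReal ((volume (K - L)).toReal / (volume L).toReal * θL) := by
  obtain ⟨ρ, hρ⟩ := hKc.isBounded.subset_closedBall 0
  have hK : K ⊆ cube n ρ := hρ.trans (closedBall_zero_subset_cube ρ)
  have hKL : IsCompact (K - L) := by simpa only [sub_eq_add_neg] using hKc.add hLc.neg
  have hbound : Tendsto (fun R => (volume (K - L)).toReal / (volume L).toReal *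
      (covDensityApprox L R + R⁻¹) * (R / (R - ρ)) ^ n) atTop
      (nhds ((volume (K - L)).toReal / (volume L).toReal * θL)) := by
    simpa using ((hθ.add tendsto_inv_atTop_zero).const_mul _).mul
      ((tendsto_div_sub_const_atTop ρ).pow n)
  refine ge_of_tendsto ((ENNReal.continuous_ofReal.tendsto _).comp hbound) ?_
  filter_upwards [eventually_gt_atTop ρ, eventually_gt_atTop 0] with R hρR hR
  exact covNumber_le_covDensityApprox hK hKL hLc hLint hρR hR (inv_pos.mpr hR)

/-- Rogers–Zong: `C(K, L) ≤ (vol(K - L)/vol(L)) · θ(L)`, where `θ(L)` is the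
translative covering density of `ℝⁿ` by `L`, defined as the limit as `R → ∞` of the
infimal density of coverings of `[-R,R]ⁿ` by translates of `L`. -/
theorem rogers_zong {n : ℕ} (hn : 1 ≤ n) (K L : Set (EuclideanSpace ℝ (Fin n)))
    (hKc : IsCompact K) (hKconv : Convex ℝ K) (hKint : (interior K).Nonempty)
    (hLc : IsCompact L) (hLconv : Convex ℝ L) (hLint : (interior L).Nonempty)
    (θL : ℝ) (hθ : Tendsto (covDensityApprox L) atTop (nhds θL)) :
    (covNumber K L : ℝ≥0∞) ≤
      ENNReal.ofReal ((volume (K - L)).toReal / (volume L).toReal * θL) :=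
  rogers_zong_general K L hKc hLc hLint θL hθ
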